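/- Let X, Y be totally bounded metric spaces such that for every ε > 0 there exists δ ∈ (0, ε) with s(X, δ) > s(Y, δ) − δ > 0, where s(Z, t) is the supremum of σ(B) over nonempty finite t-separated subsets B of Z. Then every noncontractive map f : X → Y is an isometric embedding, i.e. (X, Y) is a strongly plastic pair. -/
import Mathlib


/-- Sum of pairwise distances of a finite set. -/
noncomputable def sigmaSum {Z : Type*} [MetricSpace Z] (A : Finset Z) : ℝ :=
  ∑ a ∈ A, ∑ b ∈ A, dist a b

/-- A finite set is `t`-separated if distinct elements are at distance `≥ t`. -/
def IsSeparated' {Z : Type*} [MetricSpace Z] (t : ℝ) (A : Set Z) : Prop :=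
  ∀ a ∈ A, ∀ b ∈ A, a ≠ b → t ≤ dist a b

/-- `s(Z, t)`: supremum of `σ(B)` over nonempty finite `t`-separated subsets of `Z`. -/
noncomputable def sSep (Z : Type*) [MetricSpace Z] (t : ℝ) : ℝ :=
  sSup { s : ℝ | ∃ B : Finset Z, B.Nonempty ∧ IsSeparated' t (B : Set Z) ∧ s = sigmaSum B }

lemma bddAbove_sSepSet {Z : Type*} [MetricSpace Z] (htb : TotallyBounded (Set.univ : Set Z))
    {t : ℝ} (ht : 0 < t) :
    BddAbove { s : ℝ | ∃ B : Finset Z, B.Nonempty ∧ IsSeparated' t (B : Set Z) ∧ s = sigmaSum B } := by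
  obtain ⟨F, hFfin, hFcov⟩ := (Metric.totallyBounded_iff.mp htb) (t/2) (by positivity)
  obtain ⟨C, hC⟩ := Metric.isBounded_iff.mp htb.isBounded
  set N := hFfin.toFinset.card with hN
  refine ⟨(N:ℝ) * ((N:ℝ) * max C 0), ?_⟩
  classical
  rintro s ⟨B, hBne, hBsep, rfl⟩
  have hmap : ∀ b : Z, ∃ c ∈ hFfin.toFinset, dist b c < t/2 := by
    intro b
    have hb := hFcov (Set.mem_univ b)
    simp only [Set.mem_iUnion, Metric.mem_ball] at hb
    obtain ⟨c, hc, hlt⟩ := hb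
    exact ⟨c, hFfin.mem_toFinset.mpr hc, hlt⟩
  choose g hg hgd using hmap
  have hcard : B.card ≤ N := by
    apply Finset.card_le_card_of_injOn g (fun b _ => hg b)
    intro a ha b hb hab
    by_contra hne
    have hsep := hBsep a (Finset.mem_coe.mpr ha) b (Finset.mem_coe.mpr hb) hne
    have h1 := hgd a
    have h2 := hgd b
    have htri : dist a b ≤ dist a (g a) + dist (g b) b := by
      rw [hab]; exact dist_triangle a (g b) b
    rw [dist_comm (g b) b] at htri
    linarith
  have hdist : ∀ a b : Z, dist a b ≤ max C 0 :=
    fun a b => le_max_of_le_left (hC (Set.mem_univ a) (Set.mem_univ b))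
  calc sigmaSum B ≤ ∑ _a ∈ B, ∑ _b ∈ B, max C 0 :=
        Finset.sum_le_sum (fun a _ => Finset.sum_le_sum fun b _ => hdist a b)
    _ = (B.card : ℝ) * ((B.card : ℝ) * max C 0) := by
        simp [Finset.sum_const, nsmul_eq_mul]
    _ ≤ (N:ℝ) * ((N:ℝ) * max C 0) := by
        have hc' : (B.card:ℝ) ≤ (N:ℝ) := Nat.cast_le.mpr hcard
        have h0 : (0:ℝ) ≤ max C 0 := le_max_right _ _
        exact mul_le_mul hc' (mul_le_mul_of_nonneg_right hc' h0)
          (by positivity) (Nat.cast_nonneg N)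

theorem strongly_plastic_pair_of_sSep
    (X Y : Type*) [MetricSpace X] [MetricSpace Y]
    (hXtb : TotallyBounded (Set.univ : Set X))
    (hYtb : TotallyBounded (Set.univ : Set Y))
    (h : ∀ ε : ℝ, 0 < ε → ∃ δ : ℝ, 0 < δ ∧ δ < ε ∧
      sSep X δ > sSep Y δ - δ ∧ sSep Y δ - δ > 0)
    (f : X → Y) (hnc : ∀ x y : X, dist x y ≤ dist (f x) (f y)) :
    ∀ x y : X, dist (f x) (f y) = dist x y := by
  classical
  intro x y
  refine le_antisymm ?_ (hnc x y)
  have main : ∀ ε : ℝ, 0 < ε → dist (f x) (f y) ≤ dist x y + ε := by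
    intro ε hε
    obtain ⟨δ, hδ0, hδε, h1, h2⟩ := h (ε/5) (by positivity)
    have hYbdd : BddAbove { s : ℝ | ∃ B : Finset Y, B.Nonempty ∧
        IsSeparated' δ (B : Set Y) ∧ s = sigmaSum B } := bddAbove_sSepSet hYtb hδ0
    -- extract a near-optimal separated set in X
    have hXne : { s : ℝ | ∃ B : Finset X, B.Nonempty ∧ IsSeparated' δ (B : Set X) ∧
        s = sigmaSum B }.Nonempty := by
      rw [Set.nonempty_iff_ne_empty]
      intro hc
      have hz : sSep X δ = 0 := by rw [sSep, hc, Real.sSup_empty]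
      linarith
    obtain ⟨s, hsmem, hs⟩ := exists_lt_of_lt_csSup hXne h1
    obtain ⟨B, hBne, hBsep, rfl⟩ := hsmem
    -- f is injective on B
    have hinj : ∀ a ∈ B, ∀ b ∈ B, f a = f b → a = b := by
      intro a ha b hb hab
      by_contra hab'
      have hsep := hBsep a (Finset.mem_coe.mpr ha) b (Finset.mem_coe.mpr hb) hab'
      have := hnc a b
      rw [hab, dist_self] at this
      linarith
    have himg : sigmaSum (B.image f) = ∑ a ∈ B, ∑ b ∈ B, dist (f a) (f b) := by
      unfold sigmaSum
      rw [Finset.sum_image hinj]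
      refine Finset.sum_congr rfl fun a _ => ?_
      rw [Finset.sum_image hinj]
    have hfBsep : IsSeparated' δ ((B.image f : Finset Y) : Set Y) := by
      intro u hu v hv huv
      simp only [Finset.coe_image, Set.mem_image, Finset.mem_coe] at hu hv
      obtain ⟨a, ha, rfl⟩ := hu
      obtain ⟨b, hb, rfl⟩ := hv
      have hab : a ≠ b := fun hh => huv (by rw [hh])
      exact le_trans (hBsep a (Finset.mem_coe.mpr ha) b (Finset.mem_coe.mpr hb) hab) (hnc a b)
    have hfB_le : sigmaSum (B.image f) ≤ sSep Y δ :=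
      le_csSup hYbdd ⟨B.image f, hBne.image f, hfBsep, rfl⟩
    have hB_le_fB : sigmaSum B ≤ sigmaSum (B.image f) := by
      rw [himg]
      exact Finset.sum_le_sum fun a _ => Finset.sum_le_sum fun b _ => hnc a b
    -- pairwise almost-isometry on B
    have hpair : ∀ a ∈ B, ∀ b ∈ B, dist (f a) (f b) ≤ dist a b + δ := by
      intro a ha b hb
      have hdiff : ∑ a ∈ B, ∑ b ∈ B, (dist (f a) (f b) - dist a b)
          = sigmaSum (B.image f) - sigmaSum B := by
        rw [himg]
        unfold sigmaSum
        simp only [Finset.sum_sub_distrib]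
      have hsingle : dist (f a) (f b) - dist a b
          ≤ ∑ a ∈ B, ∑ b ∈ B, (dist (f a) (f b) - dist a b) := by
        have inner : dist (f a) (f b) - dist a b
            ≤ ∑ b ∈ B, (dist (f a) (f b) - dist a b) :=
          Finset.single_le_sum (fun c _ => sub_nonneg.mpr (hnc a c)) hb
        refine le_trans inner ?_
        exact Finset.single_le_sum
          (fun c _ => Finset.sum_nonneg fun d _ => sub_nonneg.mpr (hnc c d)) ha
      linarith
    -- f(B) is a δ-net for f(X)
    have hnet : ∀ z : X, ∃ b ∈ B, dist (f z) (f b) < δ := by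
      intro z
      by_contra hc
      push_neg at hc
      have hzne : f z ∉ B.image f := by
        simp only [Finset.mem_image, not_exists]
        rintro b ⟨hb, hfb⟩
        have := hc b hb
        rw [hfb, dist_self] at this
        linarith
      have hCsep : IsSeparated' δ ((insert (f z) (B.image f) : Finset Y) : Set Y) := by
        intro u hu v hv huv
        simp only [Finset.coe_insert, Set.mem_insert_iff, Finset.mem_coe,
          Finset.mem_image] at hu hv
        rcases hu with rfl | ⟨a, ha, rfl⟩
        · rcases hv with rfl | ⟨b, hb, rfl⟩
          · exact absurd rfl huv
          · exact hc b hb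
        · rcases hv with rfl | ⟨b, hb, rfl⟩
          · rw [dist_comm]; exact hc a ha
          · have hab : a ≠ b := fun hh => huv (by rw [hh])
            exact le_trans (hBsep a (Finset.mem_coe.mpr ha) b (Finset.mem_coe.mpr hb) hab)
              (hnc a b)
      have hexpand : sigmaSum (insert (f z) (B.image f))
          = (∑ b ∈ B.image f, dist (f z) b) + (∑ a ∈ B.image f, dist a (f z))
            + sigmaSum (B.image f) := by
        unfold sigmaSum
        rw [Finset.sum_insert hzne]
        have inner : ∀ a ∈ B.image f, ∑ b ∈ insert (f z) (B.image f), dist a b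
            = dist a (f z) + ∑ b ∈ B.image f, dist a b :=
          fun a _ => Finset.sum_insert hzne
        rw [Finset.sum_congr rfl inner, Finset.sum_insert hzne, dist_self, zero_add,
          Finset.sum_add_distrib]
        ring
      obtain ⟨b0, hb0⟩ := hBne
      have hge1 : δ ≤ ∑ b ∈ B.image f, dist (f z) b := by
        refine le_trans (hc b0 hb0) ?_
        exact Finset.single_le_sum (f := fun c => dist (f z) c)
          (fun c _ => dist_nonneg) (Finset.mem_image_of_mem f hb0)
      have hge2 : δ ≤ ∑ a ∈ B.image f, dist a (f z) := by
        refine le_trans ?_ (Finset.single_le_sum (f := fun c => dist c (f z))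
          (fun c _ => dist_nonneg) (Finset.mem_image_of_mem f hb0))
        show δ ≤ dist (f b0) (f z)
        rw [dist_comm]; exact hc b0 hb0
      have hCle : sigmaSum (insert (f z) (B.image f)) ≤ sSep Y δ :=
        le_csSup hYbdd ⟨insert (f z) (B.image f),
          ⟨f z, Finset.mem_insert_self _ _⟩, hCsep, rfl⟩
      linarith
    obtain ⟨b0, hb0, hx0⟩ := hnet x
    obtain ⟨b1, hb1, hy0⟩ := hnet y
    have hxb : dist x b0 ≤ dist (f x) (f b0) := hnc x b0
    have hyb : dist y b1 ≤ dist (f y) (f b1) := hnc y b1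
    have t1 : dist (f x) (f y) ≤ dist (f x) (f b0) + dist (f b0) (f b1) + dist (f b1) (f y) :=
      dist_triangle4 _ _ _ _
    have t2 : dist b0 b1 ≤ dist b0 x + dist x y + dist y b1 := dist_triangle4 _ _ _ _
    have t3 : dist (f b0) (f b1) ≤ dist b0 b1 + δ := hpair b0 hb0 b1 hb1
    have e1 : dist (f b1) (f y) = dist (f y) (f b1) := dist_comm _ _
    have e2 : dist b0 x = dist x b0 := dist_comm _ _
    linarith
  by_contra hlt
  push_neg at hlt
  have := main ((dist (f x) (f y) - dist x y)/2) (by linarith)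
  linarith
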